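/- arXiv:1809.07699 — 3 statements merged into one kernel-verified Lean document; each statement's English description precedes it below -/
import Mathlib

section
/- Let p be a prime and let G be a finite p-group of maximal class with |G| ≥ p^4. Then p^3 ∈ cod(G). -/
/-!
In a `p`-group `G` of maximal class and order `p ^ n`, the upper central series rises strictly
and `G ⧸ Z_{n-2}` is not cyclic, so counting forces `|Z_i| = p ^ i` for `i ≤ n - 2`. Hence
`Q = G ⧸ Z_{n-4}` has order `p ^ 4`, centre of order `p`, and contains some `x ∈ Z₂(Q) \ Z(Q)`.
The centraliser `A` of `x` is the kernel of `q ↦ ⁅x, q⁆ : Q → Z(Q)`, so it has index `p`, and it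
is abelian because its centre contains both `Z(Q)` and `x`. Inducing a linear character of `A`
that is faithful on `Z(Q)` gives a representation of degree `p` which is irreducible (its
`Q`-conjugates are told apart by their values at `x`) and faithful (its kernel is normal and meets
`Z(Q)` trivially). Inflated to `G` it has kernel `Z_{n-4}`, hence codegree `p ^ 4 / p = p ^ 3`.
-/

open CategoryTheory

/-- The degree of a complex representation: the dimension of the underlying vector space. -/
noncomputable def repDegree {G : Type} [Group G] (V : FDRep ℂ G) : ℕ :=
  Module.finrank ℂ V

/-- The kernel of a representation of `G`, as a subgroup of `G`. -/
noncomputable def repKer {G : Type} [Group G] (V : FDRep ℂ G) : Subgroup G :=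
  MonoidHom.ker (Representation.asGroupHom V.ρ)

/-- The codegree of a character: `|G : ker χ| / χ(1)`. -/
noncomputable def codegree {G : Type} [Group G] (V : FDRep ℂ G) : ℕ :=
  (repKer V).index / repDegree V

/-- `cod(G)`: the set of codegrees of the irreducible complex characters of `G`. -/
def codSet (G : Type) [Group G] : Set ℕ :=
  {m | ∃ V : FDRep ℂ G, Simple V ∧ codegree V = m}

/-- `cd(G)`: the set of degrees of the irreducible complex characters of `G`. -/
def cdSet (G : Type) [Group G] : Set ℕ :=
  {m | ∃ V : FDRep ℂ G, Simple V ∧ repDegree V = m}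

/-- The nilpotency class of `G`: the least `n` with `upperCentralSeries G n = ⊤`. -/
noncomputable def nilClass (G : Type) [Group G] : ℕ :=
  sInf {n | upperCentralSeries G n = ⊤}

open scoped Classical in
/-- The character of `G` induced from the linear character `lam` of the subgroup `H`. -/
noncomputable def indLinearChar {G : Type} [Group G] [Fintype G] (H : Subgroup G)
    (lam : H →* ℂˣ) : G → ℂ :=
  fun g => (∑ x : G, if h : x * g * x⁻¹ ∈ H then ((lam ⟨x * g * x⁻¹, h⟩ : ℂˣ) : ℂ) else 0) /
    (Nat.card H : ℂ)

/-- A finite group is normally monomial if every irreducible complex character is induced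
from a linear character of a normal subgroup. -/
def NormallyMonomial (G : Type) [Group G] [Fintype G] : Prop :=
  ∀ V : FDRep ℂ G, Simple V → ∃ (H : Subgroup G) (lam : H →* ℂˣ),
    H.Normal ∧ FDRep.character V = indLinearChar H lam

open scoped commutatorElement

namespace Subgroup

variable {G : Type*} [Group G]

theorem comap_center_quotient_upperCentralSeries (n : ℕ) :
    (center (G ⧸ upperCentralSeries G n)).comap (QuotientGroup.mk' _) =
      upperCentralSeries G (n + 1) :=
  (upperCentralSeriesStep_eq_comap_center _).symm

theorem upperCentralSeries_succ_eq_top_of_isCyclic (n : ℕ)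
    [IsCyclic (G ⧸ upperCentralSeries G (n + 1))] : upperCentralSeries G (n + 1) = ⊤ := by
  let f : G ⧸ upperCentralSeries G n →* G ⧸ upperCentralSeries G (n + 1) :=
    QuotientGroup.map _ _ (MonoidHom.id G) (upperCentralSeries_mono G n.le_succ)
  have hf : f.ker ≤ center _ := by
    intro q hq
    obtain ⟨y, rfl⟩ := QuotientGroup.mk'_surjective _ q
    rw [← mem_comap, comap_center_quotient_upperCentralSeries]
    exact (QuotientGroup.eq_one_iff y).mp hq
  have := f.isMulCommutative_of_isCyclic_of_ker_le_center hf
  rw [← comap_center_quotient_upperCentralSeries, center_eq_top, comap_top]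

theorem index_center_quotient_upperCentralSeries (n : ℕ) :
    (center (G ⧸ upperCentralSeries G n)).index = (upperCentralSeries G (n + 1)).index := by
  rw [← comap_center_quotient_upperCentralSeries,
    index_comap_of_surjective _ (QuotientGroup.mk'_surjective _)]

theorem exists_commutator_mem_center_quotient_upperCentralSeries {n : ℕ}
    (h : upperCentralSeries G (n + 1) < upperCentralSeries G (n + 2)) :
    ∃ x : G ⧸ upperCentralSeries G n, x ∉ center (G ⧸ upperCentralSeries G n) ∧
      ∀ q, ⁅x, q⁆ ∈ center (G ⧸ upperCentralSeries G n) := by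
  obtain ⟨g, hg2, hg1⟩ := SetLike.exists_of_lt h
  refine ⟨QuotientGroup.mk' _ g, ?_, fun q => ?_⟩
  · rwa [← mem_comap, comap_center_quotient_upperCentralSeries]
  · obtain ⟨y, rfl⟩ := QuotientGroup.mk'_surjective _ q
    rw [← map_commutatorElement, ← mem_comap, comap_center_quotient_upperCentralSeries]
    exact mem_upperCentralSeries_succ_iff.mp hg2 y

theorem Normal.eq_bot_of_disjoint_center [Group.IsNilpotent G] {N : Subgroup G} (hN : N.Normal)
    (h : Disjoint N (center G)) : N = ⊥ := by
  have key : ∀ n, Disjoint N (upperCentralSeries G n) := by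
    intro n
    induction n with
    | zero => simp
    | succ n ih =>
      rw [disjoint_def] at ih h ⊢
      refine fun {x} hxN hx => h hxN (mem_center_iff.mpr fun g => ?_)
      have hcomm : ⁅x, g⁆ ∈ N := by
        rw [commutatorElement_def, mul_assoc, mul_assoc, ← mul_assoc g]
        exact mul_mem hxN (hN.conj_mem _ (inv_mem hxN) g)
      exact (commutatorElement_eq_one_iff_mul_comm.mp
        (ih hcomm (mem_upperCentralSeries_succ_iff.mp hx g))).symm
  obtain ⟨n, hn⟩ := Group.IsNilpotent.nilpotent G
  simpa [hn] using key n

theorem IsComplement.eq_of_mul_inv_mem {A : Subgroup G} {T : Set G}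
    (hT : IsComplement (A : Set G) T) {t t' : G} (ht : t ∈ T) (ht' : t' ∈ T) (h : t' * t⁻¹ ∈ A) :
    t' = t :=
  congrArg Subtype.val <| (isComplement_iff_existsUnique_mul_inv_mem.mp hT t').unique
    (y₁ := ⟨t', ht'⟩) (y₂ := ⟨t, ht⟩) (by simp) h

end Subgroup

theorem nilClass_eq_nilpotencyClass (G : Type) [Group G] [Group.IsNilpotent G] :
    nilClass G = Group.nilpotencyClass G :=
  le_antisymm (Nat.sInf_le (Subgroup.upperCentralSeries_nilpotencyClass (G := G)))
    (le_csInf (Group.IsNilpotent.nilpotent G) fun _ hn =>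
      Subgroup.upperCentralSeries_eq_top_iff_nilpotencyClass_le.mp hn)

namespace IsPGroup

variable {p : ℕ} [Fact p.Prime] {G : Type*} [Group G] [Finite G]

theorem mul_card_le_card_of_lt (hG : IsPGroup p G) {H K : Subgroup G} (hHK : H < K) :
    p * Nat.card H ≤ Nat.card K := by
  obtain ⟨k, hk⟩ := (hG.to_subgroup K).index (H.subgroupOf K)
  have hk0 : k ≠ 0 := by
    rintro rfl
    rw [pow_zero, ← Subgroup.relIndex, Subgroup.relIndex_eq_one] at hk
    exact hHK.not_ge hk
  rw [← (H.subgroupOf K).card_mul_index, hk,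
    Nat.card_congr (Subgroup.subgroupOfEquivOfLe hHK.le).toEquiv, mul_comm]
  exact Nat.mul_le_mul_left _ (Nat.le_self_pow hk0 p)

theorem isMulCommutative_of_index_center_le (hG : IsPGroup p G)
    (h : (Subgroup.center G).index ≤ p) : IsMulCommutative G := by
  obtain ⟨k, hk⟩ := hG.index (Subgroup.center G)
  have hk1 : k ≤ 1 :=
    (Nat.pow_le_pow_iff_right (Fact.out : p.Prime).one_lt).mp (by simpa [hk] using h)
  have : IsCyclic (G ⧸ Subgroup.center G) := isCyclic_of_card_dvd_prime (p := p) <| by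
    rw [← Subgroup.index_eq_card, hk]
    exact (pow_dvd_pow p hk1).trans (pow_one p).dvd
  exact isMulCommutative_of_isCyclic_quotient_center_self G

theorem pow_mul_card_upperCentralSeries_le (hG : IsPGroup p G) {i j : ℕ} (hij : i ≤ j)
    (hj : j ≤ Group.nilpotencyClass G) :
    p ^ (j - i) * Nat.card (Subgroup.upperCentralSeries G i) ≤
      Nat.card (Subgroup.upperCentralSeries G j) := by
  induction j, hij using Nat.le_induction with
  | base => simp
  | succ j hij ih =>
    have hlt : Subgroup.upperCentralSeries G j < Subgroup.upperCentralSeries G (j + 1) :=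
      Subgroup.upperCentralSeries.StrictMonoOn G (Set.mem_Iic.mpr (by omega)) (Set.mem_Iic.mpr hj)
        (lt_add_one j)
    calc p ^ (j + 1 - i) * Nat.card (Subgroup.upperCentralSeries G i)
        = p * (p ^ (j - i) * Nat.card (Subgroup.upperCentralSeries G i)) := by
          rw [Nat.succ_sub hij, pow_succ]; ring
      _ ≤ p * Nat.card (Subgroup.upperCentralSeries G j) := Nat.mul_le_mul_left _ (ih (by omega))
      _ ≤ Nat.card (Subgroup.upperCentralSeries G (j + 1)) := hG.mul_card_le_card_of_lt hlt

theorem sq_le_index_upperCentralSeries (hG : IsPGroup p G) (hc : 2 ≤ Group.nilpotencyClass G) :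
    p ^ 2 ≤ (Subgroup.upperCentralSeries G (Group.nilpotencyClass G - 1)).index := by
  obtain ⟨c, hc⟩ : ∃ c, Group.nilpotencyClass G = c + 2 := ⟨_, (Nat.sub_add_cancel hc).symm⟩
  have := hG.isNilpotent
  have hne : Subgroup.upperCentralSeries G (c + 1) ≠ ⊤ := by
    rw [Ne, Subgroup.upperCentralSeries_eq_top_iff_nilpotencyClass_le]
    omega
  obtain ⟨k, hk⟩ := hG.index (Subgroup.upperCentralSeries G (c + 1))
  have hk0 : k ≠ 0 := by
    rintro rfl
    exact hne (Subgroup.index_eq_one.mp hk)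
  have hk1 : k ≠ 1 := by
    rintro rfl
    have : IsCyclic (G ⧸ Subgroup.upperCentralSeries G (c + 1)) :=
      isCyclic_of_prime_card (p := p) (by rw [← Subgroup.index_eq_card, hk, pow_one])
    exact hne (Subgroup.upperCentralSeries_succ_eq_top_of_isCyclic c)
  rw [hc, show c + 2 - 1 = c + 1 by omega, hk]
  exact Nat.pow_le_pow_right (Fact.out : p.Prime).pos (by omega)

theorem card_upperCentralSeries_of_maximalClass
    (hG : Nat.card G = p ^ (Group.nilpotencyClass G + 1)) (hc : 2 ≤ Group.nilpotencyClass G)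
    {i : ℕ} (hi : i < Group.nilpotencyClass G) :
    Nat.card (Subgroup.upperCentralSeries G i) = p ^ i := by
  set c := Group.nilpotencyClass G
  have hpG : IsPGroup p G := IsPGroup.of_card hG
  have hp := (Fact.out : p.Prime).pos
  have hlower : p ^ i ≤ Nat.card (Subgroup.upperCentralSeries G i) := by
    simpa [Subgroup.upperCentralSeries_zero] using
      hpG.pow_mul_card_upperCentralSeries_le i.zero_le hi.le
  have hupper : p ^ (c - 1 - i) * Nat.card (Subgroup.upperCentralSeries G i) * p ^ 2 ≤
      p ^ (c - 1 - i) * p ^ i * p ^ 2 :=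
    calc _ ≤ Nat.card (Subgroup.upperCentralSeries G (c - 1)) *
          (Subgroup.upperCentralSeries G (c - 1)).index :=
          Nat.mul_le_mul (hpG.pow_mul_card_upperCentralSeries_le (by omega) (by omega))
            (hpG.sq_le_index_upperCentralSeries hc)
      _ = p ^ (c - 1 - i) * p ^ i * p ^ 2 := by
          rw [Subgroup.card_mul_index, hG, ← pow_add, ← pow_add]
          congr 1
          omega
  exact le_antisymm (Nat.le_of_mul_le_mul_left (Nat.le_of_mul_le_mul_right hupper (by positivity))
    (by positivity)) hlower

theorem index_upperCentralSeries_of_maximalClass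
    (hG : Nat.card G = p ^ (Group.nilpotencyClass G + 1)) (hc : 2 ≤ Group.nilpotencyClass G)
    {i : ℕ} (hi : i < Group.nilpotencyClass G) :
    (Subgroup.upperCentralSeries G i).index = p ^ (Group.nilpotencyClass G + 1 - i) := by
  refine Nat.eq_of_mul_eq_mul_left (pow_pos (Fact.out : p.Prime).pos i) ?_
  calc p ^ i * (Subgroup.upperCentralSeries G i).index
      = Nat.card (Subgroup.upperCentralSeries G i) * (Subgroup.upperCentralSeries G i).index := by
        rw [card_upperCentralSeries_of_maximalClass hG hc hi]
    _ = p ^ i * p ^ (Group.nilpotencyClass G + 1 - i) := by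
        rw [Subgroup.card_mul_index, hG, ← pow_add]
        congr 1
        omega

theorem card_quotient_upperCentralSeries_of_maximalClass {m : ℕ}
    (hG : Nat.card G = p ^ (m + 4)) (hc : Group.nilpotencyClass G = m + 3) :
    Nat.card (G ⧸ Subgroup.upperCentralSeries G m) = p ^ 4 ∧
      Nat.card (Subgroup.center (G ⧸ Subgroup.upperCentralSeries G m)) = p := by
  have hG' : Nat.card G = p ^ (Group.nilpotencyClass G + 1) := hc ▸ hG
  have hindex : ∀ i < m + 3, (Subgroup.upperCentralSeries G i).index = p ^ (m + 4 - i) :=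
    fun i hi => by rw [index_upperCentralSeries_of_maximalClass hG' (by omega) (hc ▸ hi), hc]
  have hQ : Nat.card (G ⧸ Subgroup.upperCentralSeries G m) = p ^ 4 := by
    rw [← Subgroup.index_eq_card, hindex m (by omega), Nat.add_sub_cancel_left]
  set Z := Subgroup.center (G ⧸ Subgroup.upperCentralSeries G m)
  refine ⟨hQ, Nat.eq_of_mul_eq_mul_right (pow_pos (Fact.out : p.Prime).pos 3) ?_⟩
  calc Nat.card Z * p ^ 3 = Nat.card Z * Z.index := by
        rw [Subgroup.index_center_quotient_upperCentralSeries, hindex (m + 1) (by omega),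
          show m + 4 - (m + 1) = 3 by omega]
    _ = p * p ^ 3 := by rw [Subgroup.card_mul_index, hQ, pow_succ']

end IsPGroup

theorem FDRep.simple_of_isIrreducible {k G V : Type} [Field k] [Group G] [AddCommGroup V]
    [Module k V] [FiniteDimensional k V] (ρ : Representation k G V) [ρ.IsIrreducible] :
    Simple (FDRep.of ρ) where
  mono_isIso_iff_nonzero {Y} f _ := by
    have hinj : Function.Injective f.hom :=
      (Rep.mono_iff_injective ((forget₂ (FDRep k G) (Rep k G)).map f)).1 inferInstance
    let R : Subrepresentation ρ :=
      ⟨LinearMap.range f.hom.hom.hom, by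
        rintro g _ ⟨w, rfl⟩
        exact ⟨Y.ρ g w, (congrArg (fun φ => φ.hom.hom w) (f.comm g) :)⟩⟩
    have hbot : R = ⊥ ↔ f = 0 := by
      rw [← Subrepresentation.toSubmodule_injective.eq_iff]
      refine LinearMap.range_eq_bot.trans ⟨fun h => ?_, fun h => ?_⟩
      · ext w
        exact LinearMap.congr_fun h w
      · subst h
        rfl
    have htop : R = ⊤ ↔ Function.Surjective f.hom := by
      rw [← Subrepresentation.toSubmodule_injective.eq_iff]
      exact LinearMap.range_eq_top
    rw [ConcreteCategory.isIso_iff_bijective]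
    refine ⟨fun hbij hf => ?_, fun hf => ⟨hinj, htop.mp ?_⟩⟩
    · exact bot_ne_top ((hbot.mpr hf).symm.trans (htop.mpr hbij.2))
    · exact (eq_bot_or_eq_top R).resolve_left (mt hbot.mp hf)

theorem Representation.isIrreducible_comp_of_surjective {k G H V : Type*} [Field k] [Group G]
    [Group H] [AddCommGroup V] [Module k V] (ρ : Representation k G V) [ρ.IsIrreducible]
    {f : H →* G} (hf : Function.Surjective f) : Representation.IsIrreducible (ρ.comp f) :=
  OrderIso.isSimpleOrder (β := Subrepresentation ρ)
    { toFun S := ⟨S.toSubmodule, fun g v hv => by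
        obtain ⟨h, rfl⟩ := hf g
        exact S.apply_mem_toSubmodule h hv⟩
      invFun S := ⟨S.toSubmodule, fun h _ hv => S.apply_mem_toSubmodule (f h) hv⟩
      left_inv _ := rfl
      right_inv _ := rfl
      map_rel_iff' := Iff.rfl }

theorem repKer_of_comp_mk' {G V : Type} [Group G] [AddCommGroup V] [Module ℂ V]
    [FiniteDimensional ℂ V] (N : Subgroup G) [N.Normal] (ρ : Representation ℂ (G ⧸ N) V)
    (hρ : ρ.ker = ⊥) : repKer (FDRep.of (ρ.comp (QuotientGroup.mk' N))) = N := by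
  ext g
  rw [repKer, MonoidHom.mem_ker, Units.ext_iff, Representation.asGroupHom_apply, Units.val_one,
    FDRep.of_ρ', MonoidHom.comp_apply, ← MonoidHom.mem_ker, hρ, Subgroup.mem_bot,
    QuotientGroup.mk'_apply, QuotientGroup.eq_one_iff]

theorem codegree_of_comp_mk' {G V : Type} [Group G] [AddCommGroup V] [Module ℂ V]
    [FiniteDimensional ℂ V] (N : Subgroup G) [N.Normal] (ρ : Representation ℂ (G ⧸ N) V)
    (hρ : ρ.ker = ⊥) :
    codegree (FDRep.of (ρ.comp (QuotientGroup.mk' N))) = N.index / Module.finrank ℂ V := by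
  rw [codegree, repKer_of_comp_mk' N ρ hρ]
  rfl

namespace Representation

variable {Q : Type*} [Group Q] (A : Subgroup Q) (χ : A →* ℂˣ)

/-- The module of the representation induced from the linear character `χ` of `A`, realised as
the functions `F` on `Q` with `F (a * q) = χ a * F q`. -/
def inducedSpace : Submodule ℂ (Q → ℂ) where
  carrier := {F | ∀ (a : A) (q : Q), F (a * q) = χ a * F q}
  add_mem' hF hF' a q := by simp only [Pi.add_apply, hF a q, hF' a q, mul_add]
  zero_mem' a q := by simp
  smul_mem' c F hF a q := by simp only [Pi.smul_apply, hF a q, smul_eq_mul, mul_left_comm]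

def inducedRep : Representation ℂ Q (inducedSpace A χ) where
  toFun s := (LinearMap.funLeft ℂ ℂ (· * s)).restrict fun F hF a q => by
    simpa [LinearMap.funLeft, mul_assoc] using hF a (q * s)
  map_one' := by ext; simp [LinearMap.funLeft]
  map_mul' s t := by ext; simp [LinearMap.funLeft, mul_assoc]

variable {A χ}

@[simp]
theorem inducedRep_apply (s : Q) (F : inducedSpace A χ) (q : Q) :
    (inducedRep A χ s F : Q → ℂ) q = (F : Q → ℂ) (q * s) :=
  rfl

theorem inducedSpace_apply_mul (F : inducedSpace A χ) (a : A) (q : Q) :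
    (F : Q → ℂ) (a * q) = χ a * (F : Q → ℂ) q :=
  F.2 a q

variable (A χ)

open Classical in
noncomputable def extendByZero : inducedSpace A χ :=
  ⟨fun q => if h : q ∈ A then (χ ⟨q, h⟩ : ℂ) else 0, fun a q => by
    by_cases h : q ∈ A
    · simp only [dif_pos h, dif_pos (mul_mem a.2 h), ← Units.val_mul, ← map_mul]
      rfl
    · simp [h, (mul_mem_cancel_left a.2).not.mpr h]⟩

variable {A χ}

theorem extendByZero_apply_of_mem {q : Q} (h : q ∈ A) :
    (extendByZero A χ : Q → ℂ) q = χ ⟨q, h⟩ :=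
  dif_pos h

theorem extendByZero_apply_of_notMem {q : Q} (h : q ∉ A) :
    (extendByZero A χ : Q → ℂ) q = 0 :=
  dif_neg h

theorem extendByZero_apply_one : (extendByZero A χ : Q → ℂ) 1 = 1 := by
  rw [extendByZero_apply_of_mem A.one_mem]
  exact congrArg Units.val (map_one χ)

theorem extendByZero_ne_zero : extendByZero A χ ≠ 0 := fun h => by
  simpa [extendByZero_apply_one] using congrFun (congrArg Subtype.val h) 1

variable {T : Finset Q}

theorem inducedSpace_ext (hT : Subgroup.IsComplement (A : Set Q) T) {F F' : inducedSpace A χ}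
    (h : ∀ t ∈ T, (F : Q → ℂ) t = (F' : Q → ℂ) t) : F = F' := by
  refine Subtype.ext (funext fun q => ?_)
  obtain ⟨⟨t, ht⟩, hqt, -⟩ := Subgroup.isComplement_iff_existsUnique_mul_inv_mem.mp hT q
  have hq : q = ((⟨q * t⁻¹, hqt⟩ : A) : Q) * t := by simp
  rw [hq, inducedSpace_apply_mul, inducedSpace_apply_mul, h t ht]

theorem inducedRep_inv_extendByZero_apply [DecidableEq Q]
    (hT : Subgroup.IsComplement (A : Set Q) T) {t t' : Q} (ht : t ∈ T) (ht' : t' ∈ T) :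
    (inducedRep A χ t⁻¹ (extendByZero A χ) : Q → ℂ) t' = if t' = t then 1 else 0 := by
  rw [inducedRep_apply]
  split_ifs with h
  · rw [h, mul_inv_cancel, extendByZero_apply_one]
  · exact extendByZero_apply_of_notMem (mt (hT.eq_of_mul_inv_mem ht ht') h)

theorem eq_sum_inducedRep_inv_extendByZero (hT : Subgroup.IsComplement (A : Set Q) T)
    (F : inducedSpace A χ) :
    F = ∑ t ∈ T, (F : Q → ℂ) t • inducedRep A χ t⁻¹ (extendByZero A χ) := by
  classical
  refine inducedSpace_ext hT fun t' ht' => ?_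
  simp only [Submodule.coe_sum, Submodule.coe_smul, Finset.sum_apply, Pi.smul_apply, smul_eq_mul]
  rw [Finset.sum_congr rfl fun t ht => by rw [inducedRep_inv_extendByZero_apply hT ht ht']]
  rw [Finset.sum_mul_boole, if_pos ht']

theorem finrank_inducedSpace [Finite Q] : Module.finrank ℂ (inducedSpace A χ) = A.index := by
  classical
  obtain ⟨T, hT, -⟩ := Subgroup.exists_isComplement_right A 1
  lift T to Finset Q using T.toFinite
  let L : inducedSpace A χ →ₗ[ℂ] (T → ℂ) :=
    { toFun F t := (F : Q → ℂ) t
      map_add' _ _ := rfl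
      map_smul' _ _ := rfl }
  have hL : Function.Bijective L := by
    refine ⟨fun F F' h => inducedSpace_ext hT fun t ht => congrFun h ⟨t, ht⟩, fun c =>
      ⟨∑ t : T, c t • inducedRep A χ (t : Q)⁻¹ (extendByZero A χ), funext fun t' => ?_⟩⟩
    simp only [L, LinearMap.coe_mk, AddHom.coe_mk, Submodule.coe_sum, Submodule.coe_smul,
      Finset.sum_apply, Pi.smul_apply, smul_eq_mul]
    rw [Finset.sum_congr rfl fun t _ => by rw [inducedRep_inv_extendByZero_apply hT t.2 t'.2]]
    simp
  rw [(LinearEquiv.ofBijective L hL).finrank_eq, Module.finrank_fintype_fun_eq_card,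
    Fintype.card_coe, ← hT.card_right, Nat.card_coe_set_eq, Set.ncard_coe_finset]

theorem inducedRep_apply_of_mem_center {z : Q} (hz : z ∈ Subgroup.center Q) (hzA : z ∈ A) :
    inducedRep A χ z = (χ ⟨z, hzA⟩ : ℂ) • LinearMap.id := by
  ext F q
  rw [LinearMap.smul_apply, LinearMap.id_apply, Submodule.coe_smul, Pi.smul_apply, inducedRep_apply,
    Subgroup.mem_center_iff.mp hz q, smul_eq_mul]
  exact inducedSpace_apply_mul F ⟨z, hzA⟩ q

theorem ker_inducedRep_eq_bot [Group.IsNilpotent Q] (hZ : Subgroup.center Q ≤ A)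
    (hχ : Function.Injective (χ.comp (Subgroup.inclusion hZ))) :
    (inducedRep A χ).ker = ⊥ := by
  refine (MonoidHom.normal_ker _).eq_bot_of_disjoint_center (Subgroup.disjoint_def.mpr ?_)
  intro z hzker hz
  have h := congrArg (fun φ => ((φ (extendByZero A χ) : inducedSpace A χ) : Q → ℂ) 1)
    (MonoidHom.mem_ker.mp hzker)
  simp only [inducedRep_apply_of_mem_center hz (hZ hz), LinearMap.smul_apply, LinearMap.id_apply,
    Submodule.coe_smul, Pi.smul_apply, Module.End.one_apply, extendByZero_apply_one,
    smul_eq_mul, mul_one] at h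
  exact congrArg Subtype.val ((injective_iff_map_eq_one _).mp hχ ⟨z, hz⟩ (Units.ext h))

section Normal

variable [A.Normal]

variable (χ) in
/-- The conjugate character `a ↦ χ (q * a * q⁻¹)`. -/
def conjChar (q : Q) : A →* ℂˣ :=
  χ.comp (MulAut.conjNormal q).toMonoidHom

theorem inducedRep_apply_of_mem (a : A) (F : inducedSpace A χ) (q : Q) :
    (inducedRep A χ a F : Q → ℂ) q = conjChar χ q a * (F : Q → ℂ) q := by
  have hq : q * a = ((MulAut.conjNormal q a : A) : Q) * q := by simp [MulAut.conjNormal_apply]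
  rw [inducedRep_apply, hq, inducedSpace_apply_mul]
  rfl

theorem sum_conjChar_inv_smul_inducedRep [Fintype A] (hT : Subgroup.IsComplement (A : Set Q) T)
    (hχ : Set.InjOn (conjChar χ) T) {t : Q} (ht : t ∈ T) (F : inducedSpace A χ) :
    ∑ a : A, ((conjChar χ t a)⁻¹ : ℂ) • inducedRep A χ a F =
      (Fintype.card A * (F : Q → ℂ) t) • inducedRep A χ t⁻¹ (extendByZero A χ) := by
  classical
  refine inducedSpace_ext hT fun t' ht' => ?_
  simp only [Submodule.coe_sum, Submodule.coe_smul, Finset.sum_apply, Pi.smul_apply, smul_eq_mul,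
    inducedRep_apply_of_mem, inducedRep_inv_extendByZero_apply hT ht ht']
  split_ifs with h
  · subst h
    simp
  · have hne : (conjChar χ t)⁻¹ * conjChar χ t' ≠ 1 :=
      fun h1 => h (hχ ht' ht (inv_mul_eq_one.mp h1).symm)
    have hsum := sum_hom_units_eq_zero ((Units.coeHom ℂ).comp ((conjChar χ t)⁻¹ * conjChar χ t'))
      (fun h1 => hne (MonoidHom.ext fun a => Units.ext (DFunLike.congr_fun h1 a)))
    simp only [MonoidHom.comp_apply, MonoidHom.mul_apply, MonoidHom.inv_apply, Units.coeHom_apply,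
      Units.val_mul, Units.val_inv_eq_inv_val] at hsum
    simp [← mul_assoc, ← Finset.sum_mul, hsum]

theorem isIrreducible_inducedRep [Finite Q] (hT : Subgroup.IsComplement (A : Set Q) T)
    (hχ : Set.InjOn (conjChar χ) T) : (inducedRep A χ).IsIrreducible := by
  have : Nontrivial (Subrepresentation (inducedRep A χ)) := by
    refine ⟨⊥, ⊤, fun h => extendByZero_ne_zero (χ := χ) ?_⟩
    have he : extendByZero A χ ∈ (⊤ : Subrepresentation (inducedRep A χ)).toSubmodule :=
      Submodule.mem_top
    rw [← h] at he
    exact (Submodule.mem_bot ℂ).mp he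
  refine ⟨fun S => or_iff_not_imp_left.mpr fun hS => ?_⟩
  obtain ⟨F, hFS, hF0⟩ := Submodule.exists_mem_ne_zero_of_ne_bot
    (mt (Subrepresentation.toSubmodule_injective (a₂ := ⊥)) hS)
  obtain ⟨t, ht, hFt⟩ : ∃ t ∈ T, (F : Q → ℂ) t ≠ 0 := by
    by_contra! h
    exact hF0 (inducedSpace_ext hT fun t ht => h t ht)
  have := Fintype.ofFinite A
  have hbasis : inducedRep A χ t⁻¹ (extendByZero A χ) ∈ S.toSubmodule := by
    have hproj := sum_conjChar_inv_smul_inducedRep hT hχ ht F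
    have hmem : (Fintype.card A * (F : Q → ℂ) t) • inducedRep A χ t⁻¹ (extendByZero A χ) ∈
        S.toSubmodule :=
      hproj ▸ Submodule.sum_mem _ fun a _ => Submodule.smul_mem _ _ (S.apply_mem_toSubmodule a hFS)
    rwa [Submodule.smul_mem_iff _ (mul_ne_zero (by simp) hFt)] at hmem
  have he : extendByZero A χ ∈ S.toSubmodule := by
    simpa [← Module.End.mul_apply, ← map_mul] using S.apply_mem_toSubmodule t hbasis
  refine Subrepresentation.toSubmodule_injective (Submodule.eq_top_iff'.mpr fun F' => ?_)
  rw [eq_sum_inducedRep_inv_extendByZero hT F']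
  exact Submodule.sum_mem _ fun t _ => Submodule.smul_mem _ _ (S.apply_mem_toSubmodule _ he)

end Normal

end Representation

theorem exists_hom_units_injective_comp_of_prime_card {B C : Type*} [CommGroup B] [Finite B]
    [Group C] (ι : C →* B) (hι : Function.Injective ι) (hC : (Nat.card C).Prime) :
    ∃ χ : B →* ℂˣ, Function.Injective (χ.comp ι) := by
  have : Fact (Nat.card C).Prime := ⟨hC⟩
  have : Finite C := Nat.finite_of_card_ne_zero hC.ne_zero
  have : Nontrivial C := Finite.one_lt_card_iff_nontrivial.mp hC.one_lt
  obtain ⟨c, hc⟩ := exists_ne (1 : C)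
  have : NeZero (Monoid.exponent B : ℂ) :=
    ⟨Nat.cast_ne_zero.mpr Monoid.exponent_ne_zero_of_finite⟩
  obtain ⟨χ, hχ⟩ :=
    CommGroup.exists_apply_ne_one_of_hasEnoughRootsOfUnity B ℂ ((map_ne_one_iff ι hι).mpr hc)
  refine ⟨χ, (MonoidHom.ker_eq_bot_iff _).mp
    ((χ.comp ι).ker.eq_bot_or_eq_top_of_prime_card.resolve_right fun h => hχ ?_)⟩
  have hc' : c ∈ (χ.comp ι).ker := h ▸ Subgroup.mem_top c
  exact hc'

section CentralCommutator

variable {Q : Type*} [Group Q] {x : Q}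

variable (x) in
def centralCommutatorHom (hx : ∀ q, ⁅x, q⁆ ∈ Subgroup.center Q) : Q →* Subgroup.center Q where
  toFun q := ⟨⁅x, q⁆, hx q⟩
  map_one' := Subtype.ext (commutatorElement_one_right x)
  map_mul' q r := Subtype.ext <|
    calc ⁅x, q * r⁆ = x * q * x⁻¹ * ⁅x, r⁆ * q⁻¹ := by simp only [commutatorElement_def]; group
      _ = ⁅x, q⁆ * ⁅x, r⁆ := by
        rw [mul_assoc _ ⁅x, r⁆, ← Subgroup.mem_center_iff.mp (hx r), commutatorElement_def x q,
          mul_assoc _ q⁻¹]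

variable (hx : ∀ q, ⁅x, q⁆ ∈ Subgroup.center Q)

theorem mem_ker_centralCommutatorHom {q : Q} :
    q ∈ (centralCommutatorHom x hx).ker ↔ x * q = q * x := by
  rw [MonoidHom.mem_ker, ← commutatorElement_eq_one_iff_mul_comm, ← Subtype.val_inj]
  rfl

theorem center_le_ker_centralCommutatorHom :
    Subgroup.center Q ≤ (centralCommutatorHom x hx).ker := fun _ hz =>
  (mem_ker_centralCommutatorHom hx).mpr (Subgroup.mem_center_iff.mp hz x)

theorem centralCommutatorHom_eq_one_iff :
    centralCommutatorHom x hx = 1 ↔ x ∈ Subgroup.center Q := by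
  rw [Subgroup.mem_center_iff, DFunLike.ext_iff]
  simp only [MonoidHom.one_apply, ← MonoidHom.mem_ker, mem_ker_centralCommutatorHom]
  exact forall_congr' fun q => eq_comm

theorem index_ker_centralCommutatorHom {p : ℕ} [hp : Fact p.Prime]
    (hZ : Nat.card (Subgroup.center Q) = p) (hxZ : x ∉ Subgroup.center Q) :
    (centralCommutatorHom x hx).ker.index = p := by
  rw [Subgroup.index_ker]
  have hdvd := hZ ▸ Subgroup.card_subgroup_dvd_card (centralCommutatorHom x hx).range
  refine ((Nat.dvd_prime hp.out).mp hdvd).resolve_left fun h1 => hxZ ?_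
  rw [← centralCommutatorHom_eq_one_iff hx, ← MonoidHom.range_eq_bot_iff]
  exact Subgroup.card_eq_one.mp h1

theorem isMulCommutative_ker_centralCommutatorHom {p : ℕ} [hp : Fact p.Prime] [Finite Q]
    (hQ : Nat.card Q = p ^ 4) (hZ : Nat.card (Subgroup.center Q) = p)
    (hxZ : x ∉ Subgroup.center Q) : IsMulCommutative (centralCommutatorHom x hx).ker := by
  set A := (centralCommutatorHom x hx).ker
  have hA : Nat.card A = p ^ 3 := by
    have h := A.card_mul_index
    rw [index_ker_centralCommutatorHom hx hZ hxZ, hQ, pow_succ] at h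
    exact Nat.eq_of_mul_eq_mul_right hp.out.pos h
  have hpA : IsPGroup p A := IsPGroup.of_card hA
  have hlt : (Subgroup.center Q).subgroupOf A < Subgroup.center A := by
    have hxA : x ∈ A := (mem_ker_centralCommutatorHom hx).mpr rfl
    refine SetLike.lt_iff_le_and_exists.mpr ⟨fun z hz => ?_, ⟨x, hxA⟩, ?_, hxZ⟩
    · exact Subgroup.mem_center_iff.mpr fun a => Subtype.ext (Subgroup.mem_center_iff.mp hz a)
    · exact Subgroup.mem_center_iff.mpr fun a =>
        Subtype.ext ((mem_ker_centralCommutatorHom hx).mp a.2).symm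
  have hcard : Nat.card ((Subgroup.center Q).subgroupOf A) = p :=
    (Nat.card_congr (Subgroup.subgroupOfEquivOfLe
      (center_le_ker_centralCommutatorHom hx)).toEquiv).trans hZ
  have hZA := hcard ▸ hpA.mul_card_le_card_of_lt hlt
  refine hpA.isMulCommutative_of_index_center_le
    (Nat.le_of_mul_le_mul_left (c := p * p) ?_ (Nat.mul_pos hp.out.pos hp.out.pos))
  calc p * p * (Subgroup.center A).index
      ≤ Nat.card (Subgroup.center A) * (Subgroup.center A).index := Nat.mul_le_mul_right _ hZA
    _ = p * p * p := by rw [Subgroup.card_mul_index, hA]; ring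

theorem injOn_conjChar_ker_centralCommutatorHom (χ : (centralCommutatorHom x hx).ker →* ℂˣ)
    (hχ : Function.Injective (χ.comp (Subgroup.inclusion (center_le_ker_centralCommutatorHom hx))))
    {T : Set Q} (hT : Subgroup.IsComplement ((centralCommutatorHom x hx).ker : Set Q) T) :
    Set.InjOn (Representation.conjChar χ) T := by
  intro t ht t' ht' h
  have hxA : x ∈ (centralCommutatorHom x hx).ker := (mem_ker_centralCommutatorHom hx).mpr rfl
  -- `t * x * t⁻¹ = ⁅x, t⁆⁻¹ * x`, so the conjugates of `χ` differ at `x` by `χ ⁅x, t⁆`.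
  have hconj : ∀ s, Representation.conjChar χ s ⟨x, hxA⟩ =
      ((χ.comp (Subgroup.inclusion (center_le_ker_centralCommutatorHom hx)))
        (centralCommutatorHom x hx s))⁻¹ * χ ⟨x, hxA⟩ := by
    intro s
    rw [Representation.conjChar, MonoidHom.comp_apply, MonoidHom.comp_apply, ← map_inv χ,
      ← map_mul χ]
    congr 1
    ext
    simp only [MulEquiv.coe_toMonoidHom, MulAut.conjNormal_apply, Subgroup.coe_mul,
      Subgroup.coe_inv, Subgroup.coe_inclusion]
    simp only [centralCommutatorHom, MonoidHom.coe_mk, OneHom.coe_mk, commutatorElement_def]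
    group
  have hcomm := hχ (inv_injective (mul_right_cancel
    ((hconj t).symm.trans ((DFunLike.congr_fun h ⟨x, hxA⟩).trans (hconj t')))))
  refine hT.eq_of_mul_inv_mem ht' ht ?_
  rw [MonoidHom.mem_ker, map_mul, map_inv, hcomm, mul_inv_cancel]

end CentralCommutator

open IsMulCommutative in
theorem exists_faithful_irreducible_of_card_eq_pow_four {p : ℕ} [Fact p.Prime] {Q : Type*}
    [Group Q] [Finite Q] (hQ : Nat.card Q = p ^ 4) (hZ : Nat.card (Subgroup.center Q) = p)
    {x : Q} (hxZ : x ∉ Subgroup.center Q) (hx : ∀ q, ⁅x, q⁆ ∈ Subgroup.center Q) :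
    ∃ (A : Subgroup Q) (χ : A →* ℂˣ), (Representation.inducedRep A χ).IsIrreducible ∧
      (Representation.inducedRep A χ).ker = ⊥ ∧
      Module.finrank ℂ (Representation.inducedSpace A χ) = p := by
  have := isMulCommutative_ker_centralCommutatorHom hx hQ hZ hxZ
  have := (IsPGroup.of_card hQ).isNilpotent
  have hZA := center_le_ker_centralCommutatorHom hx
  obtain ⟨χ, hχ⟩ := exists_hom_units_injective_comp_of_prime_card (Subgroup.inclusion hZA)
    (Subgroup.inclusion_injective hZA) (hZ ▸ Fact.out)
  obtain ⟨T, hT, -⟩ := Subgroup.exists_isComplement_right (centralCommutatorHom x hx).ker 1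
  lift T to Finset Q using T.toFinite
  exact ⟨_, χ, Representation.isIrreducible_inducedRep hT
      (injOn_conjChar_ker_centralCommutatorHom hx χ hχ hT),
    Representation.ker_inducedRep_eq_bot hZA hχ,
    Representation.finrank_inducedSpace.trans (index_ker_centralCommutatorHom hx hZ hxZ)⟩

/-- A maximal class `p`-group of order at least `p^4` has `p^3` as a codegree. -/
theorem maximal_class_p_cubed_codegree (p n : ℕ) (hp : p.Prime) (G : Type) [Group G] [Fintype G]
    (hcard : Fintype.card G = p ^ n) (hn : 4 ≤ n) (hmax : nilClass G = n - 1) :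
    p ^ 3 ∈ codSet G := by
  have : Fact p.Prime := ⟨hp⟩
  obtain ⟨m, rfl⟩ : ∃ m, n = m + 4 := ⟨n - 4, by omega⟩
  have hG : Nat.card G = p ^ (m + 4) := by rw [Nat.card_eq_fintype_card, hcard]
  have := (IsPGroup.of_card hG).isNilpotent
  have hc : Group.nilpotencyClass G = m + 3 := (nilClass_eq_nilpotencyClass G).symm.trans hmax
  set N := Subgroup.upperCentralSeries G m
  obtain ⟨hQ, hZ⟩ := IsPGroup.card_quotient_upperCentralSeries_of_maximalClass hG hc
  obtain ⟨x, hxZ, hx⟩ := Subgroup.exists_commutator_mem_center_quotient_upperCentralSeries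
    (Subgroup.upperCentralSeries.StrictMonoOn G (by simp [hc]) (by simp [hc]) (lt_add_one (m + 1)))
  obtain ⟨A, χ, hirr, hker, hdeg⟩ := exists_faithful_irreducible_of_card_eq_pow_four hQ hZ hxZ hx
  set ρ := (Representation.inducedRep A χ).comp (QuotientGroup.mk' N)
  have : Representation.IsIrreducible ρ := Representation.isIrreducible_comp_of_surjective _
    (QuotientGroup.mk'_surjective N)
  refine ⟨_, FDRep.simple_of_isIrreducible ρ, ?_⟩
  rw [codegree_of_comp_mk' N _ hker, hdeg, Subgroup.index_eq_card, hQ, pow_succ,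
    Nat.mul_div_cancel _ hp.pos]
end

section
/- Let p be a prime and let G be a finite abelian p-group with |G| = p^n ≥ p^2. Then cod(G) = {p^i | 0 ≤ i ≤ n-1} if and only if G is isomorphic to Z_{p^{n-1}} × Z_p. -/
open CategoryTheory

/-! For abelian `G` every irreducible character is linear, so its codegree is its order in the
dual group `Ĝ ≅ G`: `cod(G)` is the set of element orders of `G`, i.e. the divisors of `exp G`.
The condition on `cod(G)` therefore says `exp G = p ^ (n - 1)`. Then an element `g` of order
`exp G` generates a subgroup of index `p`, which has a complement of order `p`: for `x ∉ ⟨g⟩` we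
have `x ^ p = g ^ a` with `p ∣ a`, and `x * g ^ (-a / p)` generates it. -/

open Subgroup

theorem range_orderOf_eq_setOf_dvd_exponent {G : Type*} [CommGroup G] [Finite G] :
    Set.range (orderOf : G → ℕ) = {d | d ∣ Monoid.exponent G} := by
  ext d
  refine ⟨?_, fun hd => ?_⟩
  · rintro ⟨g, rfl⟩
    exact Monoid.order_dvd_exponent g
  · obtain ⟨g, hg⟩ := Monoid.exists_orderOf_eq_exponent (G := G) .of_finite
    obtain ⟨c, hc⟩ := hd
    have hc0 : c ≠ 0 := right_ne_zero_of_mul (hc ▸ Monoid.exponent_ne_zero_of_finite)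
    refine ⟨g ^ c, ?_⟩
    rw [orderOf_pow_of_dvd hc0 (hg ▸ hc ▸ dvd_mul_left c d), hg, hc,
      Nat.mul_div_cancel _ hc0.bot_lt]

theorem exists_pow_index_eq_one_notMem_zpowers {G : Type*} [CommGroup G] [Finite G] {g : G}
    (hg : orderOf g = Monoid.exponent G) (hidx : (zpowers g).index ∣ orderOf g)
    (hidx1 : (zpowers g).index ≠ 1) :
    ∃ h : G, h ^ (zpowers g).index = 1 ∧ h ∉ zpowers g := by
  set k := (zpowers g).index
  obtain ⟨x, hx⟩ : ∃ x, x ∉ zpowers g := by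
    by_contra! h
    exact hidx1 (index_eq_one.mpr (eq_top_iff.mpr fun x _ => h x))
  obtain ⟨a, ha⟩ := mem_zpowers_iff.mp ((zpowers g).pow_index_mem x)
  obtain ⟨m, hm⟩ := hidx
  have hm0 : m ≠ 0 := by
    rintro rfl
    exact (orderOf_pos g).ne' (by simpa using hm)
  -- `x ^ exponent = 1` gives `g ^ (a * m) = 1`, so `k * m ∣ a * m`
  have hka : (k : ℤ) ∣ a := by
    have : g ^ (a * m) = 1 := by
      rw [zpow_mul, ha, zpow_natCast, ← pow_mul, ← hm, hg, Monoid.pow_exponent_eq_one]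
    rw [← orderOf_dvd_iff_zpow_eq_one, hm, Nat.cast_mul] at this
    exact (mul_dvd_mul_iff_right (by exact_mod_cast hm0)).mp this
  obtain ⟨b, rfl⟩ := hka
  refine ⟨x * g ^ (-b), ?_, fun h => hx ?_⟩
  · rw [mul_pow, ← ha, ← zpow_natCast (g ^ (-b)), ← zpow_mul, ← zpow_add, neg_mul, mul_comm,
      add_neg_cancel, zpow_zero]
  · simpa using mul_mem h (zpow_mem (mem_zpowers g) b)

theorem Subgroup.disjoint_zpowers_of_notMem {G : Type*} [Group G] {H : Subgroup G} {h : G}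
    (hp : (orderOf h).Prime) (hh : h ∉ H) : Disjoint H (zpowers h) := by
  have : Finite (zpowers h) := Nat.finite_of_card_ne_zero (Nat.card_zpowers h ▸ hp.ne_zero)
  have hle : H ⊓ zpowers h ≤ zpowers h := inf_le_right
  rcases hp.eq_one_or_self_of_dvd _ (Nat.card_zpowers h ▸ card_dvd_of_le hle) with h1 | hcard
  · exact disjoint_iff.mpr (card_eq_one.mp h1)
  · have hmem : h ∈ H ⊓ zpowers h := by
      rw [eq_of_le_of_card_ge hle (by rw [hcard, Nat.card_zpowers])]
      exact mem_zpowers h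
    exact absurd (mem_inf.mp hmem).1 hh

noncomputable def Subgroup.IsComplement'.mulEquivProd {G : Type*} [CommGroup G]
    {H K : Subgroup G} (hc : IsComplement' H K) : H × K ≃* G :=
  MulEquiv.ofBijective (H.subtype.coprod K.subtype) hc

theorem Nat.card_multiplicative_zmod (n : ℕ) : Nat.card (Multiplicative (ZMod n)) = n :=
  (Nat.card_congr Multiplicative.toAdd).trans (Nat.card_zmod n)

theorem nonempty_mulEquiv_zmod_prod_zmod {G : Type*} [CommGroup G] [Finite G] {p : ℕ}
    [Fact p.Prime] {g h : G} (hh : h ^ p = 1) (hhg : h ∉ zpowers g)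
    (hcard : Nat.card G = orderOf g * p) :
    Nonempty (G ≃* Multiplicative (ZMod (orderOf g)) × Multiplicative (ZMod p)) := by
  have hoh : orderOf h = p := orderOf_eq_prime hh fun h1 => hhg (h1 ▸ one_mem _)
  have hc : IsComplement' (zpowers g) (zpowers h) :=
    isComplement'_of_card_mul_and_disjoint (by rw [Nat.card_zpowers, Nat.card_zpowers, hoh, hcard])
      (disjoint_zpowers_of_notMem (hoh ▸ Fact.out) hhg)
  exact ⟨hc.mulEquivProd.symm.trans <| .prodCongr
    (mulEquivOfCyclicCardEq (by rw [Nat.card_zpowers, Nat.card_multiplicative_zmod]))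
    (mulEquivOfCyclicCardEq (by rw [Nat.card_zpowers, Nat.card_multiplicative_zmod, hoh]))⟩

theorem exponent_eq_pow_pred_iff_nonempty_mulEquiv {G : Type*} [CommGroup G] [Finite G]
    {p n : ℕ} (hp : p.Prime) (hcard : Nat.card G = p ^ n) (hn : 2 ≤ n) :
    Monoid.exponent G = p ^ (n - 1) ↔
      Nonempty (G ≃* Multiplicative (ZMod (p ^ (n - 1))) × Multiplicative (ZMod p)) := by
  have hpn : p ∣ p ^ (n - 1) := dvd_pow_self p (by omega)
  constructor
  · intro he
    have := Fact.mk hp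
    obtain ⟨g, hg⟩ := Monoid.exists_orderOf_eq_exponent (G := G) .of_finite
    have hcardg : Nat.card G = orderOf g * p := by
      rw [hcard, hg, he, ← pow_succ, Nat.sub_add_cancel (by omega)]
    have hidx : (zpowers g).index = p := by
      have := card_mul_index (zpowers g)
      rw [Nat.card_zpowers, hcardg] at this
      exact Nat.eq_of_mul_eq_mul_left (orderOf_pos g) this
    obtain ⟨h, hh, hhg⟩ := exists_pow_index_eq_one_notMem_zpowers hg
      (by rw [hidx, hg, he]; exact hpn) (hidx ▸ hp.ne_one)
    rw [hidx] at hh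
    obtain ⟨e⟩ := nonempty_mulEquiv_zmod_prod_zmod hh hhg hcardg
    rw [hg, he] at e
    exact ⟨e⟩
  · rintro ⟨e⟩
    rw [Monoid.exponent_eq_of_mulEquiv e, Monoid.exponent_prod, IsCyclic.exponent_eq_card,
      IsCyclic.exponent_eq_card, Nat.card_multiplicative_zmod, Nat.card_multiplicative_zmod,
      lcm_eq_nat_lcm, Nat.lcm_eq_left hpn]

theorem MonoidHom.orderOf_eq_exponent_range {G M : Type*} [Group G] [CommGroup M]
    (f : G →* M) : orderOf f = Monoid.exponent f.range := by
  refine Nat.dvd_right_iff_eq.mp fun k => ?_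
  rw [orderOf_dvd_iff_pow_eq_one, Monoid.exponent_dvd_iff_forall_pow_eq_one]
  simp [MonoidHom.ext_iff, Subtype.ext_iff]

theorem MonoidHom.index_ker_eq_orderOf {G R : Type*} [Group G] [Finite G] [CommRing R]
    [IsDomain R] (χ : G →* Rˣ) : χ.ker.index = orderOf χ := by
  have : Finite χ.range := .of_surjective _ χ.rangeRestrict_surjective
  have := isCyclic_subgroup_units χ.range
  rw [Subgroup.index_ker, orderOf_eq_exponent_range, IsCyclic.exponent_eq_card]

section Representations

variable {G : Type} [Group G]

noncomputable def charFDRep (χ : G →* ℂˣ) : FDRep ℂ G :=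
  FDRep.of ((DistribMulAction.toModuleEnd ℂ ℂ).comp χ)

theorem finrank_charFDRep (χ : G →* ℂˣ) : Module.finrank ℂ (charFDRep χ) = 1 :=
  Module.finrank_self ℂ

theorem charFDRep_ρ (χ : G →* ℂˣ) (g : G) : (charFDRep χ).ρ g = (χ g : ℂ) • 1 := by
  ext; rfl

theorem character_charFDRep (χ : G →* ℂˣ) (g : G) : (charFDRep χ).character g = χ g := by
  rw [FDRep.character, charFDRep_ρ, map_smul, LinearMap.trace_one, finrank_charFDRep]
  simp

theorem simple_charFDRep [Fintype G] (χ : G →* ℂˣ) : Simple (charFDRep χ) := by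
  rw [FDRep.simple_iff_char_is_norm_one]
  simp [character_charFDRep]

theorem mem_repKer_iff {V : FDRep ℂ G} {g : G} : g ∈ repKer V ↔ V.ρ g = 1 := by
  rw [repKer, MonoidHom.mem_ker, Units.ext_iff, Representation.asGroupHom_apply, Units.val_one]

theorem repKer_charFDRep (χ : G →* ℂˣ) : repKer (charFDRep χ) = χ.ker := by
  ext g
  rw [mem_repKer_iff, charFDRep_ρ, MonoidHom.mem_ker, Units.ext_iff, Units.val_one]
  refine ⟨fun h => ?_, fun h => by rw [h, one_smul]⟩
  have h1 := LinearMap.congr_fun h (1 : ℂ)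
  change (χ g : ℂ) * 1 = 1 at h1
  rwa [mul_one] at h1

theorem codegree_charFDRep [Finite G] (χ : G →* ℂˣ) : codegree (charFDRep χ) = orderOf χ := by
  rw [codegree, repKer_charFDRep, repDegree, finrank_charFDRep, Nat.div_one,
    MonoidHom.index_ker_eq_orderOf]

theorem repKer_eq_of_iso {V W : FDRep ℂ G} (e : V ≅ W) : repKer V = repKer W := by
  ext g
  have hconj : (FDRep.isoToLinearEquiv e).conj 1 = 1 := LinearEquiv.conj_id _
  rw [mem_repKer_iff, mem_repKer_iff, FDRep.Iso.conj_ρ e, ← hconj,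
    (FDRep.isoToLinearEquiv e).conj.injective.eq_iff]

theorem codegree_eq_of_iso {V W : FDRep ℂ G} (e : V ≅ W) : codegree V = codegree W := by
  rw [codegree, codegree, repKer_eq_of_iso e, repDegree, repDegree,
    (FDRep.isoToLinearEquiv e).finrank_eq]

theorem FDRep.nontrivial_of_simple (V : FDRep ℂ G) [Simple V] : Nontrivial V := by
  by_contra h
  have := not_nontrivial_iff_subsingleton.mp h
  exact id_nonzero V (by ext x; exact Subsingleton.elim _ _)

theorem FDRep.nonempty_charFDRep_iso {V : FDRep ℂ G} [Simple V] {χ : G →* ℂˣ}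
    (hχ : ∀ g, V.ρ g = (χ g : ℂ) • 1) : Nonempty (charFDRep χ ≅ V) := by
  have := V.nontrivial_of_simple
  obtain ⟨v, hv⟩ := exists_ne (0 : V)
  let f : charFDRep χ ⟶ V :=
    { hom := FGModuleCat.ofHom (LinearMap.toSpanSingleton ℂ V v)
      comm g := ConcreteCategory.hom_ext _ _ fun z : ℂ => by
        change ((χ g : ℂ) * z) • v = V.ρ g (z • v)
        rw [hχ, mul_smul]
        rfl }
  have : Mono f := ConcreteCategory.mono_of_injective f (smul_left_injective ℂ hv)
  have hf0 : f ≠ 0 := fun h => hv <| by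
    have h1 : f.hom (1 : ℂ) = (0 : charFDRep χ ⟶ V).hom (1 : ℂ) := by rw [h]
    change (1 : ℂ) • v = 0 at h1
    rwa [one_smul] at h1
  have := isIso_of_mono_of_nonzero hf0
  exact ⟨asIso f⟩

end Representations

noncomputable def FDRep.ρEnd {G : Type} [CommGroup G] (V : FDRep ℂ G) (g : G) : V ⟶ V where
  hom := FGModuleCat.ofHom (V.ρ g)
  comm h := by
    ext x
    change V.ρ g (V.ρ h x) = V.ρ h (V.ρ g x)
    rw [← Module.End.mul_apply, ← map_mul, mul_comm, map_mul, Module.End.mul_apply]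

theorem FDRep.exists_ρ_eq_smul_one {G : Type} [CommGroup G] (V : FDRep ℂ G) [Simple V] :
    ∃ χ : G →* ℂˣ, ∀ g, V.ρ g = (χ g : ℂ) • 1 := by
  have := V.nontrivial_of_simple
  choose c hc using fun g => endomorphism_simple_eq_smul_id ℂ (V.ρEnd g)
  have hρ : ∀ g, V.ρ g = c g • 1 := fun g => by
    ext x
    exact (congrArg (fun f : V ⟶ V => f.hom x) (hc g)).symm
  have hinj : Function.Injective fun a : ℂ => a • (1 : Module.End ℂ V) :=
    smul_left_injective ℂ one_ne_zero
  let c' : G →* ℂ :=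
    { toFun := c
      map_one' := hinj (by simp only [← hρ, map_one, one_smul])
      map_mul' := fun g h => hinj <| by
        change c (g * h) • _ = (c g * c h) • _
        rw [← hρ, map_mul, hρ, hρ, smul_mul_assoc, one_mul, mul_smul] }
  exact ⟨c'.toHomUnits, hρ⟩

theorem codSet_eq_range_orderOf {G : Type} [CommGroup G] [Fintype G] :
    codSet G = Set.range (orderOf : G → ℕ) := by
  have : NeZero (Monoid.exponent G : ℂ) := ⟨Nat.cast_ne_zero.mpr Monoid.exponent_ne_zero_of_finite⟩
  obtain ⟨φ⟩ := CommGroup.monoidHom_mulEquiv_of_hasEnoughRootsOfUnity G ℂ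
  ext d
  constructor
  · rintro ⟨V, hV, rfl⟩
    obtain ⟨χ, hχ⟩ := V.exists_ρ_eq_smul_one
    obtain ⟨e⟩ := FDRep.nonempty_charFDRep_iso hχ
    exact ⟨φ χ, by rw [← codegree_eq_of_iso e, codegree_charFDRep, MulEquiv.orderOf_eq]⟩
  · rintro ⟨g, rfl⟩
    exact ⟨charFDRep (φ.symm g), simple_charFDRep _, by
      rw [codegree_charFDRep, MulEquiv.orderOf_eq]⟩

/-- An abelian `p`-group of order `p^n ≥ p^2` has `cod(G) = {p^i | 0 ≤ i ≤ n-1}` iff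
`G ≅ ℤ_{p^{n-1}} × ℤ_p`. -/
theorem abelian_full_codegrees_iff (p n : ℕ) (hp : p.Prime) (G : Type) [CommGroup G] [Fintype G]
    (hcard : Fintype.card G = p ^ n) (hn : 2 ≤ n) :
    codSet G = {m | ∃ i ≤ n - 1, m = p ^ i} ↔
      Nonempty (G ≃* Multiplicative (ZMod (p ^ (n - 1))) × Multiplicative (ZMod p)) := by
  have hdiv : {m | ∃ i ≤ n - 1, m = p ^ i} = {d | d ∣ p ^ (n - 1)} :=
    Set.ext fun _ => (Nat.dvd_prime_pow hp).symm
  rw [codSet_eq_range_orderOf, range_orderOf_eq_setOf_dvd_exponent, hdiv]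
  exact (Set.ext_iff.trans Nat.dvd_left_iff_eq).trans
    (exponent_eq_pow_pred_iff_nonempty_mulEquiv hp (Nat.card_eq_fintype_card.trans hcard) hn)
end

section
/- Let p be a prime and let G be a normally monomial finite p-group. If χ is a faithful irreducible complex character of G, then χ(1) = b(G), where b(G) = max{θ(1) | θ ∈ Irr(G)}; moreover χ is induced from a linear character of a normal abelian subgroup of G of index χ(1). -/
open CategoryTheory

/-!
Write `χ = λ^G` with `N ⊴ G` and `λ` linear. Since `N` is normal, every conjugate of a
commutator `[a, b]` of elements of `N` is again a commutator in `N`, on which `λ` is trivial;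
so the induction formula gives `χ([a, b]) = χ(1)`, forcing `[a, b] ∈ ker χ = 1`. Hence `N` is
abelian, and evaluating at `1` gives `χ(1) = |G : N|`. Finally every irreducible representation
`W` has a common eigenvector `v` for the abelian subgroup `N`, whose translates by coset
representatives of `N` span `W`; so `θ(1) ≤ |G : N| = χ(1)` for all `θ ∈ Irr(G)`.
-/

open Module.End Polynomial
open scoped commutatorElement

theorem Multiset.eq_one_of_norm_le_one_of_sum_eq_card {s : Multiset ℂ}
    (hs : ∀ z ∈ s, ‖z‖ ≤ 1) (hsum : s.sum = Multiset.card s) : ∀ z ∈ s, z = 1 := by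
  by_contra! ⟨z, hz, hz1⟩
  have hre : ∀ w ∈ s, w.re ≤ 1 := fun w hw => (Complex.re_le_norm w).trans (hs w hw)
  have hlt : z.re < 1 := by
    refine (hre z hz).lt_of_ne fun h => hz1 (Complex.ext h ?_)
    have hnorm : ‖z‖ = 1 := le_antisymm (hs z hz) (h ▸ Complex.re_le_norm z)
    simpa using Complex.abs_re_eq_norm.mp (by rw [h, hnorm, abs_one])
  have := Multiset.sum_lt_sum (g := fun _ => (1 : ℝ)) hre ⟨z, hz, hlt⟩
  rw [← Complex.coe_reAddGroupHom, ← map_multiset_sum, hsum] at this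
  simp at this

theorem Module.End.isSemisimple_of_pow_eq_one {K V : Type*} [Field K] [AddCommGroup V]
    [Module K V] {f : Module.End K V} {n : ℕ} (hn : (n : K) ≠ 0) (hf : f ^ n = 1) :
    f.IsSemisimple :=
  isSemisimple_of_squarefree_aeval_eq_zero
    (X_pow_sub_one_separable_iff.mpr hn).squarefree (by simp [hf])

theorem Module.End.HasEigenvalue.pow_eq_one {K V : Type*} [Field K] [AddCommGroup V]
    [Module K V] {f : Module.End K V} {μ : K} {n : ℕ} (hμ : f.HasEigenvalue μ)
    (hf : f ^ n = 1) : μ ^ n = 1 := by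
  obtain ⟨v, hv⟩ := hμ.exists_hasEigenvector
  have h := hv.pow_apply n
  rw [hf, one_apply] at h
  exact smul_left_injective K hv.2 (h.symm.trans (one_smul K v).symm)

/-- The eigenvalues are roots of unity summing to the dimension, so they all equal `1`;
since `f` is semisimple, `f - 1` is then zero. -/
theorem Module.End.eq_one_of_pow_eq_one_of_trace_eq_finrank {V : Type*} [AddCommGroup V]
    [Module ℂ V] [FiniteDimensional ℂ V] {f : Module.End ℂ V} {n : ℕ} (hn : n ≠ 0)
    (hf : f ^ n = 1) (htr : LinearMap.trace ℂ V f = Module.finrank ℂ V) : f = 1 := by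
  have hroots : ∀ μ ∈ f.charpoly.roots, μ = 1 := by
    refine Multiset.eq_one_of_norm_le_one_of_sum_eq_card (fun μ hμ => ?_) ?_
    · have hμ' : f.HasEigenvalue μ :=
        (hasEigenvalue_iff_isRoot_charpoly f μ).mpr (isRoot_of_mem_roots hμ)
      exact (Complex.norm_eq_one_of_pow_eq_one (hμ'.pow_eq_one hf) hn).le
    · rw [← trace_eq_sum_roots_charpoly_of_splits (IsAlgClosed.splits _), htr,
        IsAlgClosed.card_roots_eq_natDegree, LinearMap.charpoly_natDegree]
  have hss : (f - (1 : ℂ) • LinearMap.id).IsSemisimple := by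
    rw [← Module.algebraMap_end_eq_smul_id, isSemisimple_sub_algebraMap_iff]
    exact isSemisimple_of_pow_eq_one (by exact_mod_cast hn) hf
  rw [← sub_eq_zero, ← one_smul ℂ (1 : Module.End ℂ V)]
  refine hss.eq_zero_iff_forall_eigenvalue.mpr fun μ hμ => ?_
  rw [hasEigenvalue_sub_iff, hasEigenvalue_iff_isRoot_charpoly] at hμ
  simpa using hroots _ ((mem_roots f.charpoly_monic.ne_zero).mpr hμ)

namespace FDRep

theorem ρ_pow_orderOf {k G : Type} [Field k] [Monoid G] (V : FDRep k G) (g : G) :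
    V.ρ g ^ orderOf g = 1 := by
  rw [← map_pow, pow_orderOf_eq_one, map_one]

theorem subrepresentation_eq_top {k G : Type} [Field k] [Monoid G] (V : FDRep k G) [Simple V]
    (σ : Subrepresentation V.ρ) (hσ : σ ≠ ⊥) : σ = ⊤ := by
  let f : FDRep.of σ.toRepresentation ⟶ V :=
    { hom := FGModuleCat.ofHom σ.toSubmodule.subtype, comm := fun g => by ext x; rfl }
  let F := forget₂ (FDRep k G) (Rep k G)
  have : Mono f := F.mono_of_mono_map ((Rep.mono_iff_injective _).2 Subtype.val_injective)
  have hf0 : f ≠ 0 := fun h0 => hσ <| eq_bot_iff.2 fun v hv =>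
    (Submodule.mem_bot k).2 congr(($h0).hom.hom ⟨v, hv⟩)
  have := isIso_of_mono_of_nonzero hf0
  have hsurj := (Rep.epi_iff_surjective (F.map f)).1 inferInstance
  exact eq_top_iff.2 fun v _ => by
    obtain ⟨w, rfl⟩ := hsurj v
    exact w.2

/-- The joint generalized eigenspaces of the commuting operators `ρ a` exhaust `V`, and they
are joint eigenspaces because operators of finite order are semisimple. -/
theorem exists_common_eigenvector {G : Type} [Group G] [Finite G] (V : FDRep ℂ G)
    [Nontrivial V] (A : Subgroup G) (hA : ∀ a b : A, a * b = b * a) :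
    ∃ v : V, v ≠ 0 ∧ ∀ a : A, ∃ c : ℂ, V.ρ a v = c • v := by
  let f : A → Module.End ℂ V := fun a => V.ρ a
  have hcomm : Pairwise fun a b => Commute (f a) (f b) := fun a b _ => by
    change V.ρ a * V.ρ b = V.ρ b * V.ρ a
    rw [← map_mul, ← map_mul, ← Subgroup.coe_mul, hA, Subgroup.coe_mul]
  have htop := iSup_iInf_maxGenEigenspace_eq_top_of_iSup_maxGenEigenspace_eq_top_of_commute f
    hcomm fun a => iSup_maxGenEigenspace_eq_top (f a)
  obtain ⟨χ, hχ⟩ : ∃ χ : A → ℂ, ⨅ a, (f a).maxGenEigenspace (χ a) ≠ ⊥ := by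
    by_contra! h
    simp [h] at htop
  obtain ⟨v, hv, hv0⟩ := Submodule.exists_mem_ne_zero_of_ne_bot hχ
  refine ⟨v, hv0, fun a => ⟨χ a, ?_⟩⟩
  have hss : (f a).IsSemisimple :=
    isSemisimple_of_pow_eq_one (by exact_mod_cast (orderOf_pos (a : G)).ne') (V.ρ_pow_orderOf a)
  have := (Submodule.mem_iInf _).1 hv a
  rwa [hss.isFinitelySemisimple.maxGenEigenspace_eq_eigenspace, mem_eigenspace_iff] at this

theorem finrank_le_index_of_commute {G : Type} [Group G] [Finite G] (V : FDRep ℂ G)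
    [Simple V] (A : Subgroup G) (hA : ∀ a b : A, a * b = b * a) :
    Module.finrank ℂ V ≤ A.index := by
  cases subsingleton_or_nontrivial V
  · simp [Module.finrank_zero_of_subsingleton]
  have := Fintype.ofFinite (G ⧸ A)
  obtain ⟨v, hv0, hv⟩ := V.exists_common_eigenvector A hA
  let U := Submodule.span ℂ (Set.range fun q : G ⧸ A => V.ρ q.out v)
  have hU : ∀ g : G, V.ρ g v ∈ U := fun g => by
    obtain ⟨a, ha⟩ := QuotientGroup.mk_out_eq_mul A g
    obtain ⟨c, hc⟩ := hv a⁻¹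
    have hg : g = (g : G ⧸ A).out * (a⁻¹ : A) := by rw [ha]; simp
    rw [hg, map_mul, Module.End.mul_apply, hc, map_smul]
    exact U.smul_mem c (Submodule.subset_span ⟨_, rfl⟩)
  let σ : Subrepresentation V.ρ :=
    ⟨U, fun g x hx => by
      refine (Submodule.map_span_le _ _ U).2 ?_ (Submodule.mem_map_of_mem hx)
      rintro _ ⟨q, rfl⟩
      rw [← Module.End.mul_apply, ← map_mul]
      exact hU _⟩
  have hσ : σ = ⊤ := V.subrepresentation_eq_top σ fun h => hv0 <| by
    have hvU : v ∈ U := by simpa using hU 1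
    have hvσ : v ∈ σ := hvU
    rw [h] at hvσ
    exact (Submodule.mem_bot ℂ).1 hvσ
  calc Module.finrank ℂ V = Module.finrank ℂ U := by
        rw [show U = ⊤ from congrArg Subrepresentation.toSubmodule hσ, finrank_top]
    _ ≤ Fintype.card (G ⧸ A) := finrank_range_le_card _
    _ = A.index := by rw [Subgroup.index, Nat.card_eq_fintype_card]

end FDRep

theorem mem_repKer_of_character_eq_character_one {G : Type} [Group G] [Finite G]
    (V : FDRep ℂ G) {g : G} (hg : V.character g = V.character 1) : g ∈ repKer V := by
  rw [repKer, MonoidHom.mem_ker, Units.ext_iff, Representation.asGroupHom_apply]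
  exact eq_one_of_pow_eq_one_of_trace_eq_finrank (orderOf_pos g).ne' (V.ρ_pow_orderOf g)
    (hg.trans (FDRep.char_one V))

section indLinearChar

variable {G : Type} [Group G] [Fintype G] (H : Subgroup G) (lam : H →* ℂˣ)

theorem indLinearChar_eq_of_forall_conj_mem_ker {g : G}
    (hg : ∀ x : G, x * g * x⁻¹ ∈ lam.ker.map H.subtype) :
    indLinearChar H lam g = Nat.card G / Nat.card H := by
  classical
  rw [indLinearChar, Nat.card_eq_fintype_card (α := G)]
  congr 1
  have hterm : ∀ x : G,
      (if h : x * g * x⁻¹ ∈ H then ((lam ⟨x * g * x⁻¹, h⟩ : ℂˣ) : ℂ) else 0) = 1 := fun x => by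
    obtain ⟨h, hker, hx⟩ := hg x
    have hmem : x * g * x⁻¹ ∈ H := hx ▸ h.2
    rw [dif_pos hmem, show (⟨x * g * x⁻¹, hmem⟩ : H) = h from Subtype.ext hx.symm,
      MonoidHom.mem_ker.1 hker, Units.val_one]
  simp [hterm]

theorem indLinearChar_one : indLinearChar H lam 1 = Nat.card G / Nat.card H :=
  indLinearChar_eq_of_forall_conj_mem_ker H lam fun x => ⟨1, lam.ker.one_mem, by simp⟩

theorem indLinearChar_commutatorElement (hH : H.Normal) (a b : H) :
    indLinearChar H lam ⁅(a : G), (b : G)⁆ = indLinearChar H lam 1 := by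
  rw [indLinearChar_one]
  refine indLinearChar_eq_of_forall_conj_mem_ker H lam fun x => ?_
  let conj : H →* H := (MulAut.conjNormal x : MulAut H)
  refine ⟨⁅conj a, conj b⁆, Abelianization.commutator_subset_ker lam
    (Subgroup.commutator_mem_commutator (Subgroup.mem_top _) (Subgroup.mem_top _)), ?_⟩
  simp [conj, commutatorElement_def]
  group

end indLinearChar

theorem index_eq_repDegree_of_character_eq {G : Type} [Group G] [Fintype G] {V : FDRep ℂ G}
    {H : Subgroup G} {lam : H →* ℂˣ} (hchar : V.character = indLinearChar H lam) :
    H.index = repDegree V := by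
  have h1 := congrFun hchar 1
  rw [FDRep.char_one, indLinearChar_one, ← H.card_mul_index] at h1
  have : (Nat.card H : ℂ) ≠ 0 := Nat.cast_ne_zero.mpr Nat.card_pos.ne'
  rw [Nat.cast_mul, mul_div_cancel_left₀ _ this] at h1
  exact_mod_cast h1.symm

theorem commute_of_character_eq_indLinearChar {G : Type} [Group G] [Fintype G]
    {V : FDRep ℂ G} (hfaith : repKer V = ⊥) {H : Subgroup G} (hH : H.Normal) {lam : H →* ℂˣ}
    (hchar : V.character = indLinearChar H lam) (a b : H) : a * b = b * a := by
  have hker : ⁅(a : G), (b : G)⁆ ∈ repKer V := mem_repKer_of_character_eq_character_one V <| by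
    rw [hchar, indLinearChar_commutatorElement H lam hH]
  rw [hfaith, Subgroup.mem_bot, commutatorElement_eq_one_iff_mul_comm] at hker
  exact Subtype.ext hker

theorem normally_monomial_faithful_max_degree_general (G : Type) [Group G]
    [Fintype G] (hnm : NormallyMonomial G) (V : FDRep ℂ G) (hV : Simple V)
    (hfaith : repKer V = ⊥) :
    repDegree V = sSup (cdSet G) ∧
      ∃ (H : Subgroup G) (lam : H →* ℂˣ), H.Normal ∧ (∀ a b : H, a * b = b * a) ∧
        H.index = repDegree V ∧ FDRep.character V = indLinearChar H lam := by
  obtain ⟨H, lam, hH, hchar⟩ := hnm V hV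
  have hind : H.index = repDegree V := index_eq_repDegree_of_character_eq hchar
  have habel := commute_of_character_eq_indLinearChar hfaith hH hchar
  have hmax : IsGreatest (cdSet G) (repDegree V) := ⟨⟨V, hV, rfl⟩, by
    rintro _ ⟨W, hW, rfl⟩
    exact hind ▸ W.finrank_le_index_of_commute H habel⟩
  exact ⟨hmax.csSup_eq.symm, H, lam, hH, habel, hind, hchar⟩

/-- In a normally monomial finite `p`-group, a faithful irreducible character has the maximal
degree `b(G)` and is induced from a linear character of a normal abelian subgroup of index
`χ(1)`. -/
theorem normally_monomial_faithful_max_degree (p : ℕ) (hp : p.Prime) (G : Type) [Group G]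
    [Fintype G] (hpG : IsPGroup p G) (hnm : NormallyMonomial G) (V : FDRep ℂ G) (hV : Simple V)
    (hfaith : repKer V = ⊥) :
    repDegree V = sSup (cdSet G) ∧
      ∃ (H : Subgroup G) (lam : H →* ℂˣ), H.Normal ∧ (∀ a b : H, a * b = b * a) ∧
        H.index = repDegree V ∧ FDRep.character V = indLinearChar H lam :=
  normally_monomial_faithful_max_degree_general G hnm V hV hfaith
end
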